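/- arXiv:2602.19689 — 5 statements merged into one kernel-verified Lean document; each statement's English description precedes it below -/
import Mathlib

section
/- Let I and J be finite sets, c : I → ℕ with c(i) ≥ 1, q : J → ℕ with q(j) ≥ 1, and δ : I × J → ℝ injective. Let M : I × J → {0,1} be the greedy matching obtained by processing all pairs (i,j) in strictly decreasing order of δ(i,j) and setting M(i,j) = 1 exactly when ∑_k M(i,k) < c(i) and ∑_l M(l,j) < q(j) at that point. Then M has no blocking pair: there is no pair (i,j) with M(i,j) = 0 such that both (a) ∑_{k ∈ J} M(i,k) < c(i) or there exists k ∈ J with M(i,k) = 1 and δ(i,k) < δ(i,j), and (b) ∑_{l ∈ I} M(l,j) < q(j) or there exists l ∈ I with M(l,j) = 1 and δ(l,j) < δ(i,j). -/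
/-!
When the greedy procedure reaches an unmatched pair `(i, j)`, it declines it only because row `i`
or column `j` is already full. A full line is never touched again, so it ends up exactly as it
was at that moment, and every pair matched in it was processed earlier, hence has a larger `δ`.
So the full side of `(i, j)` has neither slack nor a worse partner.
-/

section GreedyMatching

variable {I J : Type*} [Fintype I] [Fintype J] [DecidableEq I] [DecidableEq J]
  (c : I → ℕ) (q : J → ℕ)

def greedyStep (A : I × J → ℕ) (p : I × J) : I × J → ℕ :=
  if (∑ k, A (p.1, k)) < c p.1 ∧ (∑ m, A (m, p.2)) < q p.2
  then Function.update A p 1 else A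

lemma greedyStep_apply_of_ne {A : I × J → ℕ} {p p' : I × J} (h : p' ≠ p) :
    greedyStep c q A p p' = A p' := by
  unfold greedyStep
  split_ifs
  · exact Function.update_of_ne h 1 A
  · rfl

lemma foldl_greedyStep_apply_of_not_mem {A : I × J → ℕ} {L : List (I × J)} {p : I × J}
    (hp : p ∉ L) : L.foldl (greedyStep c q) A p = A p := by
  induction L generalizing A with
  | nil => rfl
  | cons x xs ih =>
    rw [List.foldl_cons, ih (fun h => hp (List.mem_cons_of_mem _ h))]
    exact greedyStep_apply_of_ne c q (fun h => hp (h ▸ List.mem_cons_self))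

lemma foldl_greedyStep_ne_zero {A : I × J → ℕ} (L : List (I × J)) {p : I × J}
    (hp : A p ≠ 0) : L.foldl (greedyStep c q) A p ≠ 0 := by
  induction L generalizing A with
  | nil => exact hp
  | cons x xs ih =>
    refine ih ?_
    rcases eq_or_ne p x with rfl | hne
    · unfold greedyStep
      split_ifs <;> simp [hp]
    · rwa [greedyStep_apply_of_ne c q hne]

lemma full_of_greedyStep_self_eq_zero {A : I × J → ℕ} {p : I × J}
    (h : greedyStep c q A p p = 0) :
    c p.1 ≤ ∑ k, A (p.1, k) ∨ q p.2 ≤ ∑ m, A (m, p.2) := by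
  unfold greedyStep at h
  split_ifs at h with hfree
  · simp at h
  · omega

lemma greedyStep_row_of_full {A : I × J → ℕ} {i : I} (h : c i ≤ ∑ k, A (i, k))
    (p : I × J) (k : J) : greedyStep c q A p (i, k) = A (i, k) := by
  unfold greedyStep
  split_ifs with hfree
  · exact Function.update_of_ne (by rintro rfl; exact hfree.1.not_ge h) _ _
  · rfl

lemma greedyStep_col_of_full {A : I × J → ℕ} {j : J} (h : q j ≤ ∑ m, A (m, j))
    (p : I × J) (m : I) : greedyStep c q A p (m, j) = A (m, j) := by
  unfold greedyStep
  split_ifs with hfree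
  · exact Function.update_of_ne (by rintro rfl; exact hfree.2.not_ge h) _ _
  · rfl

lemma foldl_greedyStep_row_of_full {A : I × J → ℕ} {i : I} (h : c i ≤ ∑ k, A (i, k))
    (L : List (I × J)) (k : J) : L.foldl (greedyStep c q) A (i, k) = A (i, k) := by
  induction L generalizing A with
  | nil => rfl
  | cons x xs ih =>
    have hrow := greedyStep_row_of_full c q h x
    rw [List.foldl_cons, ih (by simpa only [hrow] using h), hrow]

lemma foldl_greedyStep_col_of_full {A : I × J → ℕ} {j : J} (h : q j ≤ ∑ m, A (m, j))
    (L : List (I × J)) (m : I) : L.foldl (greedyStep c q) A (m, j) = A (m, j) := by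
  induction L generalizing A with
  | nil => rfl
  | cons x xs ih =>
    have hcol := greedyStep_col_of_full c q h x
    rw [List.foldl_cons, ih (by simpa only [hcol] using h), hcol]

end GreedyMatching

lemma not_sum_lt_or_exists_lt_of_le_sum {K : Type*} [Fintype K] {f : K → ℕ} {cap : ℕ}
    {ρ : K → ℝ} {r : ℝ} (hfull : cap ≤ ∑ k, f k) (hbetter : ∀ k, f k ≠ 0 → r < ρ k) :
    ¬ ((∑ k, f k) < cap ∨ ∃ k, f k = 1 ∧ ρ k < r) := by
  rintro (hslack | ⟨k, hk, hworse⟩)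
  · exact hslack.not_ge hfull
  · exact (hbetter k (by omega)).not_gt hworse

theorem stmt7_general {I J : Type*} [Fintype I] [Fintype J] [DecidableEq I] [DecidableEq J]
    (c : I → ℕ) (q : J → ℕ)
    (δ : I × J → ℝ)
    (l : List (I × J)) (hl : ∀ p : I × J, p ∈ l)
    (hsort : l.Pairwise (fun p p' => δ p' < δ p))
    (M : I × J → ℕ)
    (hM : M = l.foldl (fun A p =>
        if (∑ k, A (p.1, k)) < c p.1 ∧ (∑ m, A (m, p.2)) < q p.2
        then Function.update A p 1 else A) (fun _ => 0)) :
    ¬ ∃ (i : I) (j : J), M (i, j) = 0 ∧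
      ((∑ k, M (i, k)) < c i ∨ ∃ k : J, M (i, k) = 1 ∧ δ (i, k) < δ (i, j)) ∧
      ((∑ m, M (m, j)) < q j ∨ ∃ m : I, M (m, j) = 1 ∧ δ (m, j) < δ (i, j)) := by
  rintro ⟨i, j, hM0, hrow, hcol⟩
  obtain ⟨l₁, l₂, rfl⟩ := List.append_of_mem (hl (i, j))
  set A := l₁.foldl (greedyStep c q) fun _ => 0
  have hMA : M = ((i, j) :: l₂).foldl (greedyStep c q) A := by
    rw [hM, List.foldl_append]; rfl
  have hearlier : ∀ p, A p ≠ 0 → δ (i, j) < δ p := fun p hp =>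
    (List.pairwise_append.mp hsort).2.2 p
      (by_contra fun hp' => hp (foldl_greedyStep_apply_of_not_mem c q hp')) _ List.mem_cons_self
  have hstep : greedyStep c q A (i, j) (i, j) = 0 := by
    by_contra h
    exact foldl_greedyStep_ne_zero c q l₂ h (by rwa [hMA] at hM0)
  rcases full_of_greedyStep_self_eq_zero c q hstep with hfull | hfull
  · have hMrow k : M (i, k) = A (i, k) := hMA ▸ foldl_greedyStep_row_of_full c q hfull _ k
    simp only [hMrow] at hrow
    exact not_sum_lt_or_exists_lt_of_le_sum hfull (fun k => hearlier (i, k)) hrow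
  · have hMcol m : M (m, j) = A (m, j) := hMA ▸ foldl_greedyStep_col_of_full c q hfull _ m
    simp only [hMcol] at hcol
    exact not_sum_lt_or_exists_lt_of_le_sum hfull (fun m => hearlier (m, j)) hcol

/-- The greedy matching obtained by processing all proposer–receiver pairs in strictly
decreasing order of the (injective) dating rates `δ` has no blocking pair: there is no
unmatched pair `(i,j)` such that both `i` and `j` either have slack capacity or are matched
to a strictly worse partner (both sides rank by `δ`). -/
theorem stmt7 {I J : Type*} [Fintype I] [Fintype J] [DecidableEq I] [DecidableEq J]
    (c : I → ℕ) (hc : ∀ i, 1 ≤ c i) (q : J → ℕ) (hq : ∀ j, 1 ≤ q j)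
    (δ : I × J → ℝ) (hδ : Function.Injective δ)
    (l : List (I × J)) (hl : ∀ p : I × J, p ∈ l)
    (hsort : l.Pairwise (fun p p' => δ p' < δ p))
    (M : I × J → ℕ)
    (hM : M = l.foldl (fun A p =>
        if (∑ k, A (p.1, k)) < c p.1 ∧ (∑ m, A (m, p.2)) < q p.2
        then Function.update A p 1 else A) (fun _ => 0)) :
    ¬ ∃ (i : I) (j : J), M (i, j) = 0 ∧
      ((∑ k, M (i, k)) < c i ∨ ∃ k : J, M (i, k) = 1 ∧ δ (i, k) < δ (i, j)) ∧
      ((∑ m, M (m, j)) < q j ∨ ∃ m : I, M (m, j) = 1 ∧ δ (m, j) < δ (i, j)) :=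
  stmt7_general c q δ l hl hsort M hM
end

section
/- Let I and J be finite sets, c : I → ℕ with c(i) ≥ 1, q : J → ℝ with q(j) ≥ 0, w : I × J → ℝ with w(i,j) > 0, and δ : I × J → ℝ injective. Let M : I × J → ℝ be the output of the exposure-constrained greedy algorithm that processes all pairs (i,j) in strictly decreasing order of δ(i,j) and at each step sets M(i,j) = min{1, c(i) − ∑_k M(i,k), (q(j) − ∑_l w(l,j)·M(l,j))/w(i,j)} using current values. Then for every pair (i,j), at least one of the following holds for the final M: M(i,j) = 1, or ∑_{k ∈ J} M(i,k) = c(i), or ∑_{l ∈ I} w(l,j)·M(l,j) = q(j). -/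
/-!
A greedy step at a pair `p` raises the entry `M p` from `0` to the minimum of `1` and the
remaining row and column slacks, so row sums stay at most `c`, weighted column loads stay at most
`q`, and entries only grow. Whichever term attains the minimum is tight right after `p` is
processed, and it stays tight: the entry at `p` is never revisited, and a saturated row or column
can only grow while remaining within its capacity.
-/

namespace ExposureGreedy

open Finset Function

theorem sum_mul_update {α : Type*} [Fintype α] [DecidableEq α] (u f : α → ℝ) (a : α)
    (v : ℝ) : ∑ x, u x * update f a v x = ∑ x, u x * f x + u a * (v - f a) := by
  rw [← add_sum_erase univ _ (mem_univ a),
    ← add_sum_erase univ (fun x => u x * f x) (mem_univ a),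
    update_self, sum_congr rfl fun x hx => by rw [update_of_ne (ne_of_mem_erase hx)]]
  ring

variable {I J : Type*}

def rowSum [Fintype J] (A : I × J → ℝ) (i : I) : ℝ := ∑ k, A (i, k)

def colLoad [Fintype I] (w A : I × J → ℝ) (j : J) : ℝ := ∑ m, w (m, j) * A (m, j)

theorem rowSum_mono [Fintype J] {A B : I × J → ℝ} (h : A ≤ B) (i : I) :
    rowSum A i ≤ rowSum B i :=
  sum_le_sum fun k _ => h (i, k)

theorem colLoad_mono [Fintype I] {w : I × J → ℝ} (hw : ∀ p, 0 ≤ w p) {A B : I × J → ℝ}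
    (h : A ≤ B) (j : J) : colLoad w A j ≤ colLoad w B j :=
  sum_le_sum fun m _ => mul_le_mul_of_nonneg_left (h (m, j)) (hw (m, j))

theorem rowSum_update_self [Fintype J] [DecidableEq I] [DecidableEq J] (A : I × J → ℝ)
    (p : I × J) (v : ℝ) : rowSum (update A p v) p.1 = rowSum A p.1 + (v - A p) := by
  obtain ⟨i, j⟩ := p
  change ∑ k, (update A (i, j) v ∘ Prod.mk i) k = _
  rw [update_comp_eq_of_injective A (Prod.mk_right_injective i)]
  simpa [rowSum] using sum_mul_update 1 (A ∘ Prod.mk i) j v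

theorem rowSum_update_of_ne [Fintype J] [DecidableEq I] [DecidableEq J] (A : I × J → ℝ)
    {p : I × J} (v : ℝ) {i : I} (hi : i ≠ p.1) : rowSum (update A p v) i = rowSum A i :=
  sum_congr rfl fun _ _ => update_of_ne (fun h => hi (congrArg Prod.fst h)) _ _

theorem colLoad_update_self [Fintype I] [DecidableEq I] [DecidableEq J] (w A : I × J → ℝ)
    (p : I × J) (v : ℝ) :
    colLoad w (update A p v) p.2 = colLoad w A p.2 + w p * (v - A p) := by
  obtain ⟨i, j⟩ := p
  change ∑ m, w (m, j) * (update A (i, j) v ∘ (·, j)) m = _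
  rw [update_comp_eq_of_injective A (Prod.mk_left_injective j)]
  exact sum_mul_update (fun m => w (m, j)) (A ∘ (·, j)) i v

theorem colLoad_update_of_ne [Fintype I] [DecidableEq I] [DecidableEq J] (w A : I × J → ℝ)
    {p : I × J} (v : ℝ) {j : J} (hj : j ≠ p.2) :
    colLoad w (update A p v) j = colLoad w A j :=
  sum_congr rfl fun _ _ => by rw [update_of_ne (fun h => hj (congrArg Prod.snd h))]

variable [Fintype I] [Fintype J] (c : I → ℕ) (q : J → ℝ) (w : I × J → ℝ)

noncomputable def greedyValue (A : I × J → ℝ) (p : I × J) : ℝ :=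
  min 1 (min ((c p.1 : ℝ) - rowSum A p.1) ((q p.2 - colLoad w A p.2) / w p))

structure Feasible (A : I × J → ℝ) : Prop where
  rowSum_le : ∀ i, rowSum A i ≤ c i
  colLoad_le : ∀ j, colLoad w A j ≤ q j

def IsTight (M : I × J → ℝ) (p : I × J) : Prop :=
  M p = 1 ∨ rowSum M p.1 = c p.1 ∨ colLoad w M p.2 = q p.2

variable {c q w}

theorem feasible_zero (hq : ∀ j, 0 ≤ q j) : Feasible c q w 0 where
  rowSum_le i := by simp [rowSum]
  colLoad_le j := by simpa [colLoad] using hq j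

theorem greedyValue_le_rowSlack (A : I × J → ℝ) (p : I × J) :
    greedyValue c q w A p ≤ c p.1 - rowSum A p.1 :=
  (min_le_right _ _).trans (min_le_left _ _)

theorem greedyValue_le_colSlack (A : I × J → ℝ) (p : I × J) :
    greedyValue c q w A p ≤ (q p.2 - colLoad w A p.2) / w p :=
  (min_le_right _ _).trans (min_le_right _ _)

theorem greedyValue_nonneg (hw : ∀ p, 0 < w p) {A : I × J → ℝ}
    (hA : Feasible c q w A) (p : I × J) : 0 ≤ greedyValue c q w A p :=
  le_min zero_le_one <| le_min (sub_nonneg.2 (hA.rowSum_le p.1))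
    (div_nonneg (sub_nonneg.2 (hA.colLoad_le p.2)) (hw p).le)

variable [DecidableEq I] [DecidableEq J]

variable (c q w) in
noncomputable def greedyStep (A : I × J → ℝ) (p : I × J) : I × J → ℝ :=
  update A p (greedyValue c q w A p)

theorem feasible_greedyStep (hw : ∀ p, 0 < w p) {A : I × J → ℝ} (hA : Feasible c q w A)
    {p : I × J} (hp : A p = 0) : Feasible c q w (greedyStep c q w A p) where
  rowSum_le i := by
    rcases eq_or_ne i p.1 with rfl | hi
    · rw [greedyStep, rowSum_update_self, hp, sub_zero, ← le_sub_iff_add_le']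
      exact greedyValue_le_rowSlack A p
    · rw [greedyStep, rowSum_update_of_ne _ _ hi]
      exact hA.rowSum_le i
  colLoad_le j := by
    rcases eq_or_ne j p.2 with rfl | hj
    · rw [greedyStep, colLoad_update_self, hp, sub_zero, ← le_sub_iff_add_le',
        mul_comm, ← le_div_iff₀ (hw p)]
      exact greedyValue_le_colSlack A p
    · rw [greedyStep, colLoad_update_of_ne _ _ _ hj]
      exact hA.colLoad_le j

theorem le_greedyStep (hw : ∀ p, 0 < w p) {A : I × J → ℝ} (hA : Feasible c q w A)
    {p : I × J} (hp : A p = 0) : A ≤ greedyStep c q w A p := by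
  intro x
  rcases eq_or_ne x p with rfl | hx
  · rw [greedyStep, update_self, hp]
    exact greedyValue_nonneg hw hA x
  · rw [greedyStep, update_of_ne hx]

theorem isTight_greedyStep (hw : ∀ p, 0 < w p) {A : I × J → ℝ} {p : I × J} (hp : A p = 0) :
    IsTight c q w (greedyStep c q w A p) p := by
  rw [IsTight, greedyStep, update_self, rowSum_update_self, colLoad_update_self, hp, sub_zero]
  rcases min_choice 1 (min ((c p.1 : ℝ) - rowSum A p.1) ((q p.2 - colLoad w A p.2) / w p))
    with h | h
  · exact Or.inl h
  rcases min_choice ((c p.1 : ℝ) - rowSum A p.1) ((q p.2 - colLoad w A p.2) / w p) with h' | h'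
  · right; left
    rw [greedyValue, h, h']
    ring
  · right; right
    rw [greedyValue, h, h', mul_div_cancel₀ _ (hw p).ne']
    ring

theorem foldl_greedyStep_of_notMem {l : List (I × J)} {A : I × J → ℝ} {p : I × J}
    (hp : p ∉ l) : l.foldl (greedyStep c q w) A p = A p := by
  induction l generalizing A with
  | nil => rfl
  | cons x l ih =>
    rw [List.foldl_cons, ih (List.not_mem_of_not_mem_cons hp), greedyStep,
      update_of_ne (List.ne_of_not_mem_cons hp)]

theorem greedyStep_eq_zero_of_ne {A : I × J → ℝ} {p x : I × J} (hx : A x = 0)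
    (hxp : x ≠ p) : greedyStep c q w A p x = 0 := by
  rw [greedyStep, update_of_ne hxp, hx]

theorem feasible_foldl_greedyStep (hw : ∀ p, 0 < w p) {l : List (I × J)} {A : I × J → ℝ}
    (hA : Feasible c q w A) (hl : l.Nodup) (h0 : ∀ x ∈ l, A x = 0) :
    Feasible c q w (l.foldl (greedyStep c q w) A) := by
  induction l generalizing A with
  | nil => exact hA
  | cons p l ih =>
    obtain ⟨hpl, hl⟩ := List.nodup_cons.mp hl
    exact ih (feasible_greedyStep hw hA (h0 p List.mem_cons_self)) hl fun x hx =>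
      greedyStep_eq_zero_of_ne (h0 x (List.mem_cons_of_mem p hx)) (ne_of_mem_of_not_mem hx hpl)

theorem le_foldl_greedyStep (hw : ∀ p, 0 < w p) {l : List (I × J)} {A : I × J → ℝ}
    (hA : Feasible c q w A) (hl : l.Nodup) (h0 : ∀ x ∈ l, A x = 0) :
    A ≤ l.foldl (greedyStep c q w) A := by
  induction l generalizing A with
  | nil => exact le_rfl
  | cons p l ih =>
    obtain ⟨hpl, hl⟩ := List.nodup_cons.mp hl
    have hp := h0 p List.mem_cons_self
    exact (le_greedyStep hw hA hp).trans <| ih (feasible_greedyStep hw hA hp) hl fun x hx =>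
      greedyStep_eq_zero_of_ne (h0 x (List.mem_cons_of_mem p hx)) (ne_of_mem_of_not_mem hx hpl)

theorem IsTight.foldl_greedyStep (hw : ∀ p, 0 < w p) {l : List (I × J)} {A : I × J → ℝ}
    (hA : Feasible c q w A) (hl : l.Nodup) (h0 : ∀ x ∈ l, A x = 0) {p : I × J}
    (hAp : IsTight c q w A p) (hp : p ∉ l) : IsTight c q w (l.foldl (greedyStep c q w) A) p := by
  have hM := feasible_foldl_greedyStep hw hA hl h0
  have hle := le_foldl_greedyStep hw hA hl h0
  rcases hAp with h | h | h
  · exact Or.inl ((foldl_greedyStep_of_notMem hp).trans h)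
  · exact Or.inr <| Or.inl <| le_antisymm (hM.rowSum_le _) (h ▸ rowSum_mono hle _)
  · exact Or.inr <| Or.inr <| le_antisymm (hM.colLoad_le _)
      (h ▸ colLoad_mono (fun p => (hw p).le) hle _)

theorem isTight_foldl_greedyStep (hw : ∀ p, 0 < w p) {l : List (I × J)} {A : I × J → ℝ}
    (hA : Feasible c q w A) (hl : l.Nodup) (h0 : ∀ x ∈ l, A x = 0) {p : I × J} (hp : p ∈ l) :
    IsTight c q w (l.foldl (greedyStep c q w) A) p := by
  obtain ⟨l₁, l₂, rfl⟩ := List.append_of_mem hp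
  obtain ⟨hl₁, ⟨hpl₂, hl₂⟩, hdisj⟩ := by
    simpa only [List.nodup_append, List.nodup_cons] using hl
  have hpl₁ : p ∉ l₁ := fun h => hdisj p h p List.mem_cons_self rfl
  set A₁ := l₁.foldl (greedyStep c q w) A
  have hA₁p : A₁ p = 0 := (foldl_greedyStep_of_notMem hpl₁).trans (h0 p (by simp))
  have hA₁ : Feasible c q w A₁ :=
    feasible_foldl_greedyStep hw hA hl₁ fun x hx => h0 x (List.mem_append_left _ hx)
  have h0₂ : ∀ x ∈ l₂, greedyStep c q w A₁ p x = 0 := fun x hx =>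
    greedyStep_eq_zero_of_ne
      ((foldl_greedyStep_of_notMem fun h => hdisj x h x (List.mem_cons_of_mem p hx) rfl).trans
        (h0 x (by simp [hx])))
      (ne_of_mem_of_not_mem hx hpl₂)
  rw [List.foldl_append, List.foldl_cons]
  exact (isTight_greedyStep hw hA₁p).foldl_greedyStep hw (feasible_greedyStep hw hA₁ hA₁p)
    hl₂ h0₂ hpl₂

end ExposureGreedy

theorem stmt10_general {I J : Type*} [Fintype I] [Fintype J] [DecidableEq I] [DecidableEq J]
    (c : I → ℕ) (q : J → ℝ) (hq : ∀ j, 0 ≤ q j)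
    (w : I × J → ℝ) (hw : ∀ p, 0 < w p)
    (δ : I × J → ℝ)
    (l : List (I × J)) (hl : ∀ p : I × J, p ∈ l)
    (hsort : l.Pairwise (fun p p' => δ p' < δ p))
    (M : I × J → ℝ)
    (hM : M = l.foldl (fun A p =>
        Function.update A p
          (min 1 (min ((c p.1 : ℝ) - ∑ k, A (p.1, k))
            ((q p.2 - ∑ m, w (m, p.2) * A (m, p.2)) / w p)))) (fun _ => 0)) :
    ∀ (i : I) (j : J), M (i, j) = 1 ∨ (∑ k, M (i, k)) = c i ∨
      (∑ m, w (m, j) * M (m, j)) = q j := by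
  intro i j
  have hnd : l.Nodup := hsort.imp fun h => ne_of_apply_ne δ h.ne'
  subst hM
  exact ExposureGreedy.isTight_foldl_greedyStep hw (ExposureGreedy.feasible_zero hq) hnd
    (fun _ _ => rfl) (hl (i, j))

/-- Complementary slackness for the exposure-constrained greedy matrix: for every pair
`(i,j)`, either `M(i,j) = 1`, or the proposer's cognitive capacity is exactly saturated
(`∑_k M(i,k) = c i`), or the receiver's exposure budget is exactly saturated
(`∑_l w(l,j)·M(l,j) = q j`). -/
theorem stmt10 {I J : Type*} [Fintype I] [Fintype J] [DecidableEq I] [DecidableEq J]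
    (c : I → ℕ) (hc : ∀ i, 1 ≤ c i) (q : J → ℝ) (hq : ∀ j, 0 ≤ q j)
    (w : I × J → ℝ) (hw : ∀ p, 0 < w p)
    (δ : I × J → ℝ) (hδ : Function.Injective δ)
    (l : List (I × J)) (hl : ∀ p : I × J, p ∈ l)
    (hsort : l.Pairwise (fun p p' => δ p' < δ p))
    (M : I × J → ℝ)
    (hM : M = l.foldl (fun A p =>
        Function.update A p
          (min 1 (min ((c p.1 : ℝ) - ∑ k, A (p.1, k))
            ((q p.2 - ∑ m, w (m, p.2) * A (m, p.2)) / w p)))) (fun _ => 0)) :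
    ∀ (i : I) (j : J), M (i, j) = 1 ∨ (∑ k, M (i, k)) = c i ∨
      (∑ m, w (m, j) * M (m, j)) = q j :=
  stmt10_general c q hq w hw δ l hl hsort M hM
end

section
/- Let I and J be finite index sets, c : I → ℕ, and let M be a real I × J matrix with 0 ≤ M(i,j) ≤ 1 for all (i,j) and ∑_{j ∈ J} M(i,j) ≤ c(i) for every i ∈ I. Then M lies in the convex hull of the set of I × J matrices with entries in {0,1} whose row sums are at most c(i) for every i; that is, M is a finite convex combination of deterministic recommendation matrices each satisfying the same capacity constraints. -/
/-!
Row by row, the claim is that the polytope `P = {v ∈ [0,1]^J | ∑ v ≤ c}` is the convex hull of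
its 0–1 points, and the convex hull of a product of sets is the product of their convex hulls.
`P` is compact and convex, so by Krein–Milman it is the closed convex hull of its extreme points;
as there are finitely many 0–1 points, it suffices that every extreme point `v` of `P` is a 0–1
vector. If `v` had two fractional coordinates, shifting mass `±ε` between them would stay in `P`.
If it had exactly one, `∑ v` would not be an integer, so the constraint `∑ v ≤ c` is slack and
that coordinate alone can be moved by `±ε`.
-/

open Finset

theorem eq_zero_of_add_mem_of_sub_mem_of_mem_extremePoints {𝕜 E : Type*} [Ring 𝕜] [LinearOrder 𝕜]
    [IsStrictOrderedRing 𝕜] [Invertible (2 : 𝕜)] [AddCommGroup E] [Module 𝕜 E]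
    {A : Set E} {x d : E} (hx : x ∈ A.extremePoints 𝕜) (hadd : x + d ∈ A) (hsub : x - d ∈ A) :
    d = 0 := by
  simpa using hx.2 hadd hsub (mem_openSegment_add_sub x d)

theorem IsCompact.subset_convexHull_of_extremePoints_subset {E : Type*} [AddCommGroup E]
    [Module ℝ E] [TopologicalSpace E] [T2Space E] [IsTopologicalAddGroup E] [ContinuousSMul ℝ E]
    [LocallyConvexSpace ℝ E] {K T : Set E} (hK : IsCompact K) (hKconv : Convex ℝ K)
    (hT : T.Finite) (hext : K.extremePoints ℝ ⊆ T) : K ⊆ convexHull ℝ T := by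
  rw [← closure_convexHull_extremePoints hK hKconv]
  exact closure_minimal (convexHull_mono hext) (hT.isClosed_convexHull ℝ)

theorem Finset.exists_nat_sum_eq_of_forall_eq_zero_or_eq_one {ι R : Type*}
    [AddCommMonoidWithOne R] {s : Finset ι} {f : ι → R} (h : ∀ i ∈ s, f i = 0 ∨ f i = 1) :
    ∃ m : ℕ, ∑ i ∈ s, f i = m := by
  refine Finset.sum_induction f (fun x ↦ ∃ m : ℕ, x = m) ?_ ⟨0, Nat.cast_zero.symm⟩ ?_
  · rintro _ _ ⟨m, rfl⟩ ⟨n, rfl⟩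
    exact ⟨m + n, (Nat.cast_add m n).symm⟩
  · intro i hi
    rcases h i hi with h0 | h1
    exacts [⟨0, by rw [h0, Nat.cast_zero]⟩, ⟨1, by rw [h1, Nat.cast_one]⟩]

section CappedCube

variable (J : Type*) [Fintype J]

def cappedCube (c : ℝ) : Set (J → ℝ) := Set.Icc 0 1 ∩ {v | ∑ j, v j ≤ c}

variable {J}

theorem isCompact_cappedCube (c : ℝ) : IsCompact (cappedCube J c) :=
  isCompact_Icc.inter_right (isClosed_le (continuous_finsetSum _ fun j _ ↦ continuous_apply j)
    continuous_const)

theorem convex_cappedCube (c : ℝ) : Convex ℝ (cappedCube J c) :=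
  (convex_Icc 0 1).inter (convex_halfSpace_le
    ⟨fun _ _ ↦ Finset.sum_add_distrib, fun _ _ ↦ (Finset.mul_sum _ _ _).symm⟩ c)

theorem mem_Ioo_of_mem_cappedCube {c : ℝ} {v : J → ℝ} (hv : v ∈ cappedCube J c) {j : J}
    (hj : ¬(v j = 0 ∨ v j = 1)) : v j ∈ Set.Ioo 0 1 := by
  rw [← Set.Icc_sdiff_both]
  exact ⟨⟨hv.1.1 j, hv.1.2 j⟩, by simpa using hj⟩

theorem eq_zero_of_mem_extremePoints_cappedCube {c : ℝ} {v d : J → ℝ}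
    (hv : v ∈ (cappedCube J c).extremePoints ℝ) (hd : ∀ j, |d j| ≤ min (v j) (1 - v j))
    (hsum : ∑ j, v j + |∑ j, d j| ≤ c) : d = 0 := by
  have hbox (j : J) : v j + d j ∈ Set.Icc 0 1 ∧ v j - d j ∈ Set.Icc 0 1 := by
    have hle := abs_le.1 ((hd j).trans (min_le_left _ _))
    have hle' := abs_le.1 ((hd j).trans (min_le_right _ _))
    constructor <;> constructor <;> linarith
  have hsum_add : ∑ j, (v + d) j ≤ c := by
    simp only [Pi.add_apply, sum_add_distrib]
    linarith [le_abs_self (∑ j, d j)]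
  have hsum_sub : ∑ j, (v - d) j ≤ c := by
    simp only [Pi.sub_apply, sum_sub_distrib]
    linarith [neg_abs_le (∑ j, d j)]
  exact eq_zero_of_add_mem_of_sub_mem_of_mem_extremePoints hv
    ⟨⟨fun j ↦ (hbox j).1.1, fun j ↦ (hbox j).1.2⟩, hsum_add⟩
    ⟨⟨fun j ↦ (hbox j).2.1, fun j ↦ (hbox j).2.2⟩, hsum_sub⟩

theorem eq_of_mem_extremePoints_cappedCube_of_mem_Ioo {c : ℝ} {v : J → ℝ}
    (hv : v ∈ (cappedCube J c).extremePoints ℝ) {j₀ j₁ : J} (h₀ : v j₀ ∈ Set.Ioo 0 1)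
    (h₁ : v j₁ ∈ Set.Ioo 0 1) : j₀ = j₁ := by
  classical
  obtain ⟨⟨hv0, hv1⟩, hvsum⟩ := extremePoints_subset hv
  by_contra hne
  set ε := min (min (v j₀) (1 - v j₀)) (min (v j₁) (1 - v j₁))
  have hε : 0 < ε := by
    simp only [ε, lt_min_iff, sub_pos]
    exact ⟨h₀, h₁⟩
  have hd := eq_zero_of_mem_extremePoints_cappedCube hv
    (d := Pi.single j₀ ε - Pi.single j₁ ε) (fun j ↦ ?_) ?_
  · simpa [hne, hε.ne'] using congr_fun hd j₀
  · rcases eq_or_ne j j₀ with rfl | hj₀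
    · simp only [Pi.sub_apply, Pi.single_eq_same, Pi.single_eq_of_ne hne, sub_zero,
        abs_of_pos hε]
      exact min_le_left _ _
    rcases eq_or_ne j j₁ with rfl | hj₁
    · simp only [Pi.sub_apply, Pi.single_eq_same, Pi.single_eq_of_ne hj₀, zero_sub, abs_neg,
        abs_of_pos hε]
      exact min_le_right _ _
    simpa [hj₀, hj₁] using ⟨hv0 j, hv1 j⟩
  · simpa [sum_sub_distrib] using hvsum

theorem eq_zero_or_eq_one_of_mem_extremePoints_cappedCube_of_forall_ne {c : ℕ} {v : J → ℝ}
    (hv : v ∈ (cappedCube J c).extremePoints ℝ) {j₀ : J}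
    (hother : ∀ j ≠ j₀, v j = 0 ∨ v j = 1) : v j₀ = 0 ∨ v j₀ = 1 := by
  classical
  have hvP := extremePoints_subset hv
  have ⟨⟨hv0, hv1⟩, hvsum⟩ := hvP
  change ∑ j, v j ≤ c at hvsum
  by_contra hfrac
  obtain ⟨h0, h1⟩ := mem_Ioo_of_mem_cappedCube hvP hfrac
  obtain ⟨m, hm⟩ := exists_nat_sum_eq_of_forall_eq_zero_or_eq_one (s := Finset.univ.erase j₀)
    (f := v) fun j hj ↦ hother j (ne_of_mem_erase hj)
  have hsplit : ∑ j, v j = v j₀ + m := by rw [← add_sum_erase _ _ (Finset.mem_univ j₀), hm]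
  have hm_lt : m < c := by exact_mod_cast (show (m : ℝ) < c by linarith)
  have hm_succ : (m : ℝ) + 1 ≤ c := by exact_mod_cast hm_lt
  set ε := min (v j₀) (1 - v j₀)
  have hε : 0 < ε := lt_min h0 (by linarith)
  have hd := eq_zero_of_mem_extremePoints_cappedCube hv (d := Pi.single j₀ ε) (fun j ↦ ?_) ?_
  · simpa [hε.ne'] using congr_fun hd j₀
  · rcases eq_or_ne j j₀ with rfl | hj₀
    · simp [abs_of_pos hε, ε]
    simpa [hj₀] using ⟨hv0 j, hv1 j⟩
  · simp only [sum_pi_single', Finset.mem_univ, if_true, abs_of_pos hε, hsplit]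
    linarith [min_le_right (v j₀) (1 - v j₀)]

theorem eq_zero_or_eq_one_of_mem_extremePoints_cappedCube {c : ℕ} {v : J → ℝ}
    (hv : v ∈ (cappedCube J c).extremePoints ℝ) (j₀ : J) : v j₀ = 0 ∨ v j₀ = 1 := by
  have hfrac {j : J} (hj : ¬(v j = 0 ∨ v j = 1)) : v j ∈ Set.Ioo 0 1 :=
    mem_Ioo_of_mem_cappedCube (extremePoints_subset hv) hj
  by_contra h₀
  refine h₀ (eq_zero_or_eq_one_of_mem_extremePoints_cappedCube_of_forall_ne hv fun j hj ↦ ?_)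
  by_contra h
  exact hj (eq_of_mem_extremePoints_cappedCube_of_mem_Ioo hv (hfrac h) (hfrac h₀))

theorem cappedCube_subset_convexHull (c : ℕ) :
    cappedCube J c ⊆ convexHull ℝ {w : J → ℝ | (∀ j, w j = 0 ∨ w j = 1) ∧ ∑ j, w j ≤ c} := by
  refine (isCompact_cappedCube _).subset_convexHull_of_extremePoints_subset
    (convex_cappedCube _) ?_ fun v hv ↦
      ⟨eq_zero_or_eq_one_of_mem_extremePoints_cappedCube hv, (extremePoints_subset hv).2⟩
  refine (Set.Finite.pi (t := fun _ ↦ ({0, 1} : Set ℝ)) fun _ ↦ by simp).subset ?_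
  exact fun w hw j _ ↦ hw.1 j

end CappedCube

/-- Any recommendation matrix with entries in `[0,1]` and row sums at most `c i` lies in the
convex hull of the 0–1 matrices whose row sums are at most `c i` (Birkhoff-type
decomposition into deterministic recommendations). -/
theorem stmt11 {I J : Type*} [Fintype I] [Fintype J]
    (c : I → ℕ) (M : Matrix I J ℝ)
    (hM01 : ∀ i j, M i j ∈ Set.Icc (0 : ℝ) 1)
    (hMrow : ∀ i, ∑ j, M i j ≤ c i) :
    M ∈ convexHull ℝ {A : Matrix I J ℝ |
      (∀ i j, A i j = 0 ∨ A i j = 1) ∧ ∀ i, ∑ j, A i j ≤ c i} := by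
  have hrows : ∀ i ∈ Set.univ, M i ∈ convexHull ℝ
      {w : J → ℝ | (∀ j, w j = 0 ∨ w j = 1) ∧ ∑ j, w j ≤ c i} := fun i _ ↦
    cappedCube_subset_convexHull (c i) ⟨⟨fun j ↦ (hM01 i j).1, fun j ↦ (hM01 i j).2⟩, hMrow i⟩
  refine convexHull_mono ?_ (mem_convexHull_pi hrows)
  exact fun A hA ↦ ⟨fun i ↦ (hA i trivial).1, fun i ↦ (hA i trivial).2⟩
end

section
/- Let p₁, …, p_n ∈ [0,1], let B₁, …, B_n be independent Bernoulli random variables with P(B_k = 1) = p_k, let X = ∑_{k=1}^n B_k, and set μ = ∑_{k=1}^n p_k. Let Y have the Poisson distribution with rate μ. Then ∑_{m=0}^∞ |P(X = m) − P(Y = m)| ≤ 2·∑_{k=1}^n p_k². Equivalently, the total variation distance between the law of X and the Poisson(μ) distribution is at most ∑_{k=1}^n p_k². -/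
/-!
The ℓ¹ distance between mass functions on `ℕ` is subadditive under convolution of probability
measures, since `f₁ ⋆ g₁ - f₂ ⋆ g₂ = (f₁ - f₂) ⋆ g₁ + f₂ ⋆ (g₁ - g₂)` and `‖f ⋆ g‖₁ ≤ ‖f‖₁ ‖g‖₁`.
The law of a sum of independent variables is the convolution of their laws, and
`Po(a) ∗ Po(b) = Po(a + b)`, so the distance between the law of `X` and `Po(μ)` is at most the sum
of the distances between the law of each `B k` and `Po(p k)`. For a single Bernoulli variable
this distance is exactly `2 p (1 - e^{-p}) ≤ 2 p²`.
-/

open MeasureTheory ProbabilityTheory Finset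
open scoped NNReal

noncomputable def natConv (f g : ℕ → ℝ) (m : ℕ) : ℝ := ∑ x ∈ antidiagonal m, f x.1 * g x.2

lemma natConv_sub_natConv (f₁ f₂ g₁ g₂ : ℕ → ℝ) :
    natConv f₁ g₁ - natConv f₂ g₂ = natConv (f₁ - f₂) g₁ + natConv f₂ (g₁ - g₂) := by
  ext m
  simp only [natConv, Pi.sub_apply, Pi.add_apply, ← sum_sub_distrib, ← sum_add_distrib]
  exact sum_congr rfl fun _ _ => by ring

lemma summable_abs_natConv {f g : ℕ → ℝ} (hf : Summable fun m => |f m|)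
    (hg : Summable fun m => |g m|) : Summable fun m => |natConv f g m| := by
  simp only [← Real.norm_eq_abs] at hf hg ⊢
  exact summable_norm_sum_mul_antidiagonal_of_summable_norm hf hg

lemma tsum_abs_natConv_le {f g : ℕ → ℝ} (hf : Summable fun m => |f m|)
    (hg : Summable fun m => |g m|) :
    ∑' m, |natConv f g m| ≤ (∑' m, |f m|) * ∑' m, |g m| := by
  have hf' : Summable fun m => ‖|f m|‖ := by simpa only [Real.norm_eq_abs, abs_abs] using hf
  have hg' : Summable fun m => ‖|g m|‖ := by simpa only [Real.norm_eq_abs, abs_abs] using hg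
  rw [tsum_mul_tsum_eq_tsum_sum_antidiagonal_of_summable_norm hf' hg']
  have hprod := summable_sum_mul_antidiagonal_of_summable_norm' hf' hf hg' hg
  refine (summable_abs_natConv hf hg).tsum_le_tsum (fun m => ?_) hprod
  exact (abs_sum_le_sum_abs _ _).trans_eq (sum_congr rfl fun _ _ => abs_mul _ _)

section MassFunction

variable {α : Type*} [MeasurableSpace α] [Countable α] [MeasurableSingletonClass α]

lemma hasSum_measureReal_singleton (μ : Measure α) [IsFiniteMeasure μ] :
    HasSum (fun x => μ.real {x}) (μ.real Set.univ) := by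
  have h : ∑' x, μ {x} = μ Set.univ := by
    conv_rhs => rw [← μ.sum_smul_dirac, Measure.sum_apply _ MeasurableSet.univ]
    simp
  have := ENNReal.hasSum_toReal (h ▸ measure_ne_top μ Set.univ)
  rwa [← ENNReal.tsum_toReal_eq (fun _ => measure_ne_top _ _), h] at this

lemma summable_measureReal_singleton (μ : Measure α) [IsFiniteMeasure μ] :
    Summable fun x => μ.real {x} :=
  (hasSum_measureReal_singleton μ).summable

lemma summable_abs_measureReal_singleton_sub (μ ν : Measure α) [IsFiniteMeasure μ]
    [IsFiniteMeasure ν] : Summable fun x => |μ.real {x} - ν.real {x}| :=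
  ((summable_measureReal_singleton μ).sub (summable_measureReal_singleton ν)).abs

end MassFunction

lemma conv_real_singleton_eq_natConv (ν ρ : Measure ℕ) [IsFiniteMeasure ν] [IsFiniteMeasure ρ]
    (m : ℕ) : (ν ∗ ρ).real {m} = natConv (fun i => ν.real {i}) (fun j => ρ.real {j}) m := by
  have : (fun x : ℕ × ℕ => x.1 + x.2) ⁻¹' {m} = ↑(antidiagonal m) := by ext; simp
  rw [Measure.conv, map_measureReal_apply measurable_add (measurableSet_singleton m), this,
    ← sum_measureReal_singleton, natConv]
  refine sum_congr rfl fun x _ => ?_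
  rw [← Set.singleton_prod_singleton, measureReal_prod_prod]

/-- Twice the total variation distance. -/
noncomputable def l1Dist (ν ρ : Measure ℕ) : ℝ := ∑' m, |ν.real {m} - ρ.real {m}|

lemma l1Dist_conv_le (ν₁ ν₂ ρ₁ ρ₂ : Measure ℕ) [IsProbabilityMeasure ν₁]
    [IsProbabilityMeasure ν₂] [IsProbabilityMeasure ρ₁] [IsProbabilityMeasure ρ₂] :
    l1Dist (ν₁ ∗ ρ₁) (ν₂ ∗ ρ₂) ≤ l1Dist ν₁ ν₂ + l1Dist ρ₁ ρ₂ := by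
  set f₁ := fun m => ν₁.real {m}
  set f₂ := fun m => ν₂.real {m}
  set g₁ := fun m => ρ₁.real {m}
  set g₂ := fun m => ρ₂.real {m}
  have hf := summable_abs_measureReal_singleton_sub ν₁ ν₂
  have hg := summable_abs_measureReal_singleton_sub ρ₁ ρ₂
  have hf₂ := (summable_measureReal_singleton ν₂).abs
  have hg₁ := (summable_measureReal_singleton ρ₁).abs
  have hs₁ := summable_abs_natConv (f := f₁ - f₂) hf hg₁
  have hs₂ := summable_abs_natConv (g := g₁ - g₂) hf₂ hg
  have hsplit : ∀ m, (ν₁ ∗ ρ₁).real {m} - (ν₂ ∗ ρ₂).real {m} =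
      natConv (f₁ - f₂) g₁ m + natConv f₂ (g₁ - g₂) m := fun m => by
    rw [conv_real_singleton_eq_natConv, conv_real_singleton_eq_natConv]
    exact congrFun (natConv_sub_natConv f₁ f₂ g₁ g₂) m
  calc l1Dist (ν₁ ∗ ρ₁) (ν₂ ∗ ρ₂)
      ≤ ∑' m, (|natConv (f₁ - f₂) g₁ m| + |natConv f₂ (g₁ - g₂) m|) :=
        (summable_abs_measureReal_singleton_sub _ _).tsum_le_tsum
          (fun m => hsplit m ▸ abs_add_le _ _) (hs₁.add hs₂)
    _ = ∑' m, |natConv (f₁ - f₂) g₁ m| + ∑' m, |natConv f₂ (g₁ - g₂) m| := hs₁.tsum_add hs₂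
    _ ≤ l1Dist ν₁ ν₂ * ∑' m, |g₁ m| + (∑' m, |f₂ m|) * l1Dist ρ₁ ρ₂ :=
        add_le_add (tsum_abs_natConv_le hf hg₁) (tsum_abs_natConv_le hf₂ hg)
    _ = l1Dist ν₁ ν₂ + l1Dist ρ₁ ρ₂ := by
        simp only [g₁, f₂, abs_of_nonneg measureReal_nonneg,
          (hasSum_measureReal_singleton _).tsum_eq, probReal_univ, mul_one, one_mul]

lemma l1Dist_map_sum_poissonMeasure_le {Ω ι : Type*} [MeasurableSpace Ω] (P : Measure Ω)
    [IsProbabilityMeasure P] {X : ι → Ω → ℕ} (hX : ∀ k, Measurable (X k))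
    (hindep : iIndepFun X P) (r : ι → ℝ≥0) (s : Finset ι) :
    l1Dist (P.map (∑ k ∈ s, X k)) Po(∑ k ∈ s, r k) ≤ ∑ k ∈ s, l1Dist (P.map (X k)) Po(r k) := by
  classical
  have hlaw : ∀ {Y : Ω → ℕ}, Measurable Y → IsProbabilityMeasure (P.map Y) :=
    fun hY => Measure.isProbabilityMeasure_map hY.aemeasurable
  induction s using Finset.induction_on with
  | empty =>
    have hzero : ∀ m, (P.map (0 : Ω → ℕ)).real {m} = 0 ^ m / m.factorial := fun m => by
      rcases m with _ | m <;> simp [Pi.zero_def, Measure.map_const, measureReal_def]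
    simp [l1Dist, poissonMeasure_real_singleton, hzero]
  | insert j s hj ih =>
    have hS : Measurable (∑ k ∈ s, X k) := by fun_prop
    have := hlaw hS
    have := hlaw (hX j)
    rw [sum_insert hj, sum_insert hj, sum_insert hj, add_comm (X j), add_comm (r j),
      (hindep.indepFun_finsetSum_of_notMem hX hj).map_add_eq_map_conv_map hS (hX j),
      ← poissonMeasure_conv_poissonMeasure, add_comm (l1Dist _ _)]
    exact (l1Dist_conv_le _ _ _ _).trans (add_le_add_left ih _)

lemma l1Dist_map_poissonMeasure_of_bernoulli {Ω : Type*} [MeasurableSpace Ω] (P : Measure Ω)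
    [IsProbabilityMeasure P] {B : Ω → ℕ} (hB : Measurable B) (hB01 : ∀ ω, B ω = 0 ∨ B ω = 1)
    {a : ℝ≥0} (ha : P.real {ω | B ω = 1} = a) :
    l1Dist (P.map B) Po(a) = 2 * a * (1 - Real.exp (-a)) := by
  have hlaw : ∀ m, (P.map B).real {m} = P.real {ω | B ω = m} := fun m =>
    map_measureReal_apply hB (measurableSet_singleton m)
  have h0 : (P.map B).real {0} = 1 - a := by
    have : {ω | B ω = 0} = {ω | B ω = 1}ᶜ := by
      ext ω; rcases hB01 ω with h | h <;> simp [h]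
    rw [hlaw, this, probReal_compl_eq_one_sub (s := {ω | B ω = 1})
      (hB (measurableSet_singleton 1)), ha]
  have h1 : (P.map B).real {1} = a := by rw [hlaw, ha]
  have h2 : ∀ m, (P.map B).real {m + 2} = 0 := fun m => by
    have : {ω | B ω = m + 2} = ∅ := by
      ext ω; rcases hB01 ω with h | h <;> simp [h]
    rw [hlaw, this, measureReal_empty]
  have hPo := (hasSum_measureReal_singleton Po(a)).tsum_eq
  rw [probReal_univ, ← (summable_measureReal_singleton _).sum_add_tsum_nat_add 2] at hPo
  rw [l1Dist, ← (summable_abs_measureReal_singleton_sub _ _).sum_add_tsum_nat_add 2]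
  simp only [h2, zero_sub, abs_neg, abs_of_nonneg measureReal_nonneg, sum_range_succ,
    sum_range_zero, h0, h1, zero_add] at hPo ⊢
  simp only [poissonMeasure_real_singleton, pow_zero, pow_one, Nat.factorial_zero,
    Nat.factorial_one, Nat.cast_one, div_one, mul_one] at hPo ⊢
  have hexp := Real.one_sub_le_exp_neg (a : ℝ)
  have hexp' : Real.exp (-a) ≤ 1 := Real.exp_le_one_iff.2 (neg_nonpos.2 a.2)
  rw [abs_of_nonpos (by linarith), abs_of_nonneg (by nlinarith [a.2])]
  linarith

/-- Le Cam's theorem: if `X = ∑ B_k` is a sum of independent Bernoulli random variables with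
success probabilities `p k` and `μ = ∑ p k`, then the total variation-type distance
`∑_m |P(X = m) − μ^m e^{−μ}/m!|` is at most `2 ∑ p k ^ 2`. -/
theorem stmt12 {Ω : Type*} [MeasurableSpace Ω] (P : Measure Ω) [IsProbabilityMeasure P]
    (n : ℕ) (p : Fin n → ℝ) (hp : ∀ k, p k ∈ Set.Icc (0 : ℝ) 1)
    (B : Fin n → Ω → ℕ) (hmeas : ∀ k, Measurable (B k))
    (hB01 : ∀ k ω, B k ω = 0 ∨ B k ω = 1)
    (hBp : ∀ k, (P {ω | B k ω = 1}).toReal = p k)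
    (hindep : ProbabilityTheory.iIndepFun B P)
    (μ : ℝ) (hμ : μ = ∑ k, p k) :
    ∑' m : ℕ, |(P {ω | (∑ k, B k ω) = m}).toReal - μ ^ m * Real.exp (-μ) / Nat.factorial m|
      ≤ 2 * ∑ k, (p k) ^ 2 := by
  let r : Fin n → ℝ≥0 := fun k => ⟨p k, (hp k).1⟩
  have hr : ∀ k, (r k : ℝ) = p k := fun _ => rfl
  have hμr : ((∑ k, r k : ℝ≥0) : ℝ) = μ := by rw [NNReal.coe_sum, hμ]; simp only [hr]
  have hX : (∑ k, B k) = fun ω => ∑ k, B k ω := by ext; simp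
  have hterm : ∀ m : ℕ, (P {ω | (∑ k, B k ω) = m}).toReal - μ ^ m * Real.exp (-μ) / m.factorial
      = (P.map (∑ k, B k)).real {m} - Po(∑ k, r k).real {m} := fun m => by
    rw [map_measureReal_apply (by fun_prop) (measurableSet_singleton m),
      poissonMeasure_real_singleton, hμr, hX, measureReal_def, mul_comm (Real.exp _)]
    rfl
  calc _ = l1Dist (P.map (∑ k, B k)) Po(∑ k, r k) := tsum_congr fun m => by rw [hterm]
    _ ≤ ∑ k, l1Dist (P.map (B k)) Po(r k) :=
        l1Dist_map_sum_poissonMeasure_le P hmeas hindep r univ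
    _ ≤ ∑ k, 2 * p k ^ 2 := sum_le_sum fun k _ => by
        rw [l1Dist_map_poissonMeasure_of_bernoulli P (hmeas k) (hB01 k) (a := r k) (hBp k), hr,
          sq, mul_assoc]
        exact mul_le_mul_of_nonneg_left
          (mul_le_mul_of_nonneg_left (by linarith [Real.one_sub_le_exp_neg (p k)]) (hp k).1)
          zero_le_two
    _ = 2 * ∑ k, p k ^ 2 := (mul_sum _ _ _).symm
end

section
/- Let p₁, …, p_n ∈ [0,1] with μ = ∑_{k=1}^n p_k > 0, and let X = ∑_{k=1}^n B_k be the sum of independent Bernoulli random variables with P(B_k = 1) = p_k. Then |E[1/(1+X)] − (1 − e^{−μ})/μ| ≤ 2·∑_{k=1}^n p_k². -/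
/-!
Encode the law of an `ℕ`-valued random variable by its probability generating function, a formal
power series whose coefficients have `ℓ¹` norm one. Independence turns sums of variables into
products of series, Poisson series multiply by adding their parameters, and the `ℓ¹` norm of
coefficients is submultiplicative; telescoping `∏ φᵢ - ∏ ψᵢ` therefore bounds the `ℓ¹` distance
between the Poisson binomial law and Poisson(μ) by the sum of the distances between
Bernoulli(pᵢ) and Poisson(pᵢ), each equal to `2 pᵢ (1 - e^{-pᵢ}) ≤ 2 pᵢ²` (Le Cam).
As `1 / (1 + n) ∈ [0, 1]`, the two harmonic moments differ by at most that distance, and the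
Poisson one is `∑ e^{-μ} μⁿ / (n + 1)! = (1 - e^{-μ}) / μ`.
-/

open MeasureTheory ProbabilityTheory PowerSeries Finset
open scoped ENNReal

theorem ENNReal.tsum_mul_tsum_eq_tsum_sum_antidiagonal (f g : ℕ → ℝ≥0∞) :
    (∑' n, f n) * ∑' n, g n = ∑' n, ∑ kl ∈ antidiagonal n, f kl.1 * g kl.2 := by
  simp_rw [← ENNReal.tsum_mul_right, ← ENNReal.tsum_mul_left, ← Finset.tsum_subtype]
  rw [← ENNReal.tsum_prod, ← HasAntidiagonal.sigmaAntidiagonalEquivProd.tsum_eq,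
    ENNReal.tsum_sigma']
  rfl

namespace PowerSeries

variable {R : Type*}

-- Valued in `ℝ≥0∞`, so that the estimates below need no summability hypotheses.
noncomputable def l1Norm [NormedRing R] (φ : R⟦X⟧) : ℝ≥0∞ := ∑' n, ‖coeff n φ‖ₑ

section NormedRing

variable [NormedRing R]

theorem l1Norm_add_le (φ ψ : R⟦X⟧) : l1Norm (φ + ψ) ≤ l1Norm φ + l1Norm ψ := by
  rw [l1Norm, l1Norm, l1Norm, ← ENNReal.tsum_add]
  exact ENNReal.tsum_le_tsum fun n => by simpa using enorm_add_le _ _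

theorem l1Norm_mul_le (φ ψ : R⟦X⟧) : l1Norm (φ * ψ) ≤ l1Norm φ * l1Norm ψ := by
  rw [l1Norm, l1Norm, l1Norm, ENNReal.tsum_mul_tsum_eq_tsum_sum_antidiagonal]
  refine ENNReal.tsum_le_tsum fun n => ?_
  rw [coeff_mul]
  exact (enorm_sum_le _ _).trans (sum_le_sum fun kl _ => enorm_smul_le (r := coeff kl.1 φ))

end NormedRing

section NormedCommRing

variable [NormedCommRing R] [NormOneClass R]

theorem l1Norm_prod_le_one {ι : Type*} (s : Finset ι) (φ : ι → R⟦X⟧)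
    (hφ : ∀ i ∈ s, l1Norm (φ i) ≤ 1) : l1Norm (∏ i ∈ s, φ i) ≤ 1 := by
  induction s using Finset.cons_induction with
  | empty =>
    rw [prod_empty, l1Norm, tsum_eq_single 0 fun n hn => by simp [coeff_one, hn]]
    simp
  | cons a s ha ih =>
    rw [prod_cons]
    calc l1Norm (φ a * ∏ i ∈ s, φ i) ≤ l1Norm (φ a) * l1Norm (∏ i ∈ s, φ i) := l1Norm_mul_le _ _
      _ ≤ 1 * 1 := by
        gcongr
        · exact hφ a (mem_cons_self a s)
        · exact ih fun i hi => hφ i (mem_cons_of_mem hi)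
      _ = 1 := one_mul 1

theorem l1Norm_prod_sub_prod_le {ι : Type*} (s : Finset ι) (φ ψ : ι → R⟦X⟧)
    (hφ : ∀ i ∈ s, l1Norm (φ i) ≤ 1) (hψ : ∀ i ∈ s, l1Norm (ψ i) ≤ 1) :
    l1Norm (∏ i ∈ s, φ i - ∏ i ∈ s, ψ i) ≤ ∑ i ∈ s, l1Norm (φ i - ψ i) := by
  induction s using Finset.cons_induction with
  | empty => simp [l1Norm]
  | cons a s ha ih =>
    simp only [forall_mem_cons] at hφ hψ
    rw [prod_cons, prod_cons, sum_cons]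
    have hsplit : φ a * ∏ i ∈ s, φ i - ψ a * ∏ i ∈ s, ψ i
        = (φ a - ψ a) * ∏ i ∈ s, φ i + ψ a * (∏ i ∈ s, φ i - ∏ i ∈ s, ψ i) := by ring
    calc l1Norm (φ a * ∏ i ∈ s, φ i - ψ a * ∏ i ∈ s, ψ i)
        ≤ l1Norm (φ a - ψ a) * l1Norm (∏ i ∈ s, φ i)
          + l1Norm (ψ a) * l1Norm (∏ i ∈ s, φ i - ∏ i ∈ s, ψ i) := by
          rw [hsplit]
          exact (l1Norm_add_le _ _).trans (add_le_add (l1Norm_mul_le _ _) (l1Norm_mul_le _ _))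
      _ ≤ l1Norm (φ a - ψ a) * 1 + 1 * ∑ i ∈ s, l1Norm (φ i - ψ i) := by
          gcongr
          · exact l1Norm_prod_le_one s φ hφ.2
          · exact hψ.1
          · exact ih hφ.2 hψ.2
      _ = _ := by rw [mul_one, one_mul]

end NormedCommRing

theorem l1Norm_eq_ofReal_of_hasSum {φ : ℝ⟦X⟧} {a : ℝ}
    (h : HasSum (fun n => |coeff n φ|) a) : l1Norm φ = ENNReal.ofReal a := by
  simp_rw [l1Norm, Real.enorm_eq_ofReal_abs]
  rw [← ENNReal.ofReal_tsum_of_nonneg (fun n => abs_nonneg _) h.summable, h.tsum_eq]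

theorem l1Norm_eq_one_of_hasSum {φ : ℝ⟦X⟧} (h0 : ∀ n, 0 ≤ coeff n φ)
    (h : HasSum (fun n => coeff n φ) 1) : l1Norm φ = 1 := by
  rw [l1Norm_eq_ofReal_of_hasSum (a := 1), ENNReal.ofReal_one]
  simpa only [abs_of_nonneg (h0 _)] using h

theorem abs_tsum_mul_coeff_le {φ : ℝ⟦X⟧} {f : ℕ → ℝ} (hf : ∀ n, |f n| ≤ 1) {ε : ℝ}
    (hε : 0 ≤ ε) (hφ : l1Norm φ ≤ ENNReal.ofReal ε) : |∑' n, f n * coeff n φ| ≤ ε := by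
  have : ‖∑' n, f n * coeff n φ‖ₑ ≤ l1Norm φ := by
    refine enorm_tsum_le_tsum_enorm.trans (ENNReal.tsum_le_tsum fun n => ?_)
    rw [enorm_mul]
    refine mul_le_of_le_one_left' ?_
    simpa [Real.enorm_eq_ofReal_abs] using hf n
  rw [← ENNReal.ofReal_le_ofReal_iff hε, ← Real.enorm_eq_ofReal_abs]
  exact this.trans hφ

end PowerSeries

noncomputable def poissonSeries (t : ℝ) : ℝ⟦X⟧ := C (Real.exp (-t)) * rescale t (exp ℝ)

theorem coeff_poissonSeries (t : ℝ) (n : ℕ) :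
    coeff n (poissonSeries t) = Real.exp (-t) * t ^ n / n.factorial := by
  simp [poissonSeries, coeff_exp, div_eq_mul_inv, mul_assoc]

theorem poissonSeries_add (s t : ℝ) :
    poissonSeries (s + t) = poissonSeries s * poissonSeries t := by
  rw [poissonSeries, poissonSeries, poissonSeries, ← exp_mul_exp_eq_exp_add, neg_add,
    Real.exp_add, map_mul]
  ring

theorem poissonSeries_sum {ι : Type*} (s : Finset ι) (t : ι → ℝ) :
    poissonSeries (∑ i ∈ s, t i) = ∏ i ∈ s, poissonSeries (t i) := by
  classical
  induction s using Finset.induction_on with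
  | empty => simp [poissonSeries]
  | insert a s ha ih => rw [sum_insert ha, prod_insert ha, poissonSeries_add, ih]

theorem hasSum_coeff_poissonSeries (t : ℝ) : HasSum (fun n => coeff n (poissonSeries t)) 1 := by
  have := (NormedSpace.expSeries_div_hasSum_exp t).mul_left (Real.exp (-t))
  rw [← Real.exp_eq_exp_ℝ, ← Real.exp_add, neg_add_cancel, Real.exp_zero] at this
  simpa only [coeff_poissonSeries, mul_div_assoc] using this

theorem hasSum_one_div_succ_mul_coeff_poissonSeries {t : ℝ} (ht : t ≠ 0) :
    HasSum (fun n : ℕ => 1 / (1 + (n : ℝ)) * coeff n (poissonSeries t))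
      ((1 - Real.exp (-t)) / t) := by
  have hshift : HasSum (fun n : ℕ => t ^ (n + 1) / (n + 1).factorial) (Real.exp t - 1) := by
    simpa [Real.exp_eq_exp_ℝ] using
      (hasSum_nat_add_iff' 1).mpr (NormedSpace.expSeries_div_hasSum_exp t)
  have hterm (n : ℕ) : 1 / (1 + (n : ℝ)) * coeff n (poissonSeries t)
      = Real.exp (-t) / t * (t ^ (n + 1) / (n + 1).factorial) := by
    rw [coeff_poissonSeries, Nat.factorial_succ, pow_succ]
    push_cast
    field_simp
    ring
  have hvalue : (1 - Real.exp (-t)) / t = Real.exp (-t) / t * (Real.exp t - 1) := by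
    rw [mul_sub, ← mul_div_right_comm, ← Real.exp_add, neg_add_cancel, Real.exp_zero]
    ring
  rw [hvalue]
  exact (hshift.mul_left _).congr_fun hterm

theorem l1Norm_poissonSeries {t : ℝ} (ht : 0 ≤ t) : l1Norm (poissonSeries t) = 1 :=
  l1Norm_eq_one_of_hasSum (fun n => by rw [coeff_poissonSeries]; positivity)
    (hasSum_coeff_poissonSeries t)

theorem l1Norm_bernoulli_sub_poissonSeries_le {p : ℝ} (hp : 0 ≤ p) :
    l1Norm (C (1 - p) + C p * X - poissonSeries p) ≤ ENNReal.ofReal (2 * p ^ 2) := by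
  set β : ℝ⟦X⟧ := C (1 - p) + C p * X
  have hβ (n : ℕ) : coeff n β = (if n = 0 then 1 - p else 0) + if n = 1 then p else 0 := by
    rcases n with _ | _ | n <;> simp [β, coeff_one]
  have hexp : 1 - p ≤ Real.exp (-p) := by linarith [Real.add_one_le_exp (-p)]
  have hexp1 : Real.exp (-p) ≤ 1 := Real.exp_le_one_iff.mpr (neg_nonpos.mpr hp)
  set gap := 2 * (p - p * Real.exp (-p))
  -- `|c| = -c + 2 max c 0`, and `c = coeff n (β - poissonSeries p)` is positive only at `n = 1`
  have habs (n : ℕ) : |coeff n (β - poissonSeries p)|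
      = coeff n (poissonSeries p) - coeff n β + if n = 1 then gap else 0 := by
    rw [map_sub, hβ, coeff_poissonSeries]
    rcases n with _ | _ | n
    · simp only [↓reduceIte, zero_ne_one, add_zero, pow_zero, mul_one, Nat.factorial_zero,
        Nat.cast_one, div_one]
      rw [abs_of_nonpos (by linarith)]
      ring
    · simp only [zero_add, one_ne_zero, ↓reduceIte, pow_one, Nat.factorial_one, Nat.cast_one,
        div_one]
      rw [abs_of_nonneg (by nlinarith)]
      ring
    · simp only [Nat.add_eq_zero_iff, one_ne_zero, and_false, ↓reduceIte, Nat.add_eq_right,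
        add_zero, zero_sub, abs_neg, sub_zero, abs_eq_self]
      positivity
  have hsum := ((hasSum_coeff_poissonSeries p).sub
    (((hasSum_ite_eq 0 (1 - p)).add (hasSum_ite_eq 1 p)).congr_fun hβ)).add (hasSum_ite_eq 1 gap)
  rw [l1Norm_eq_ofReal_of_hasSum (hsum.congr_fun habs), sub_add_cancel, sub_self, zero_add]
  exact ENNReal.ofReal_le_ofReal (by nlinarith)

section GeneratingFunction

variable {Ω : Type*} [MeasurableSpace Ω] {P : Measure Ω}

variable (P) in
noncomputable def pgf (Y : Ω → ℕ) : ℝ⟦X⟧ := PowerSeries.mk fun n => P.real (Y ⁻¹' {n})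

@[simp]
theorem coeff_pgf (Y : Ω → ℕ) (n : ℕ) : coeff n (pgf P Y) = P.real (Y ⁻¹' {n}) := coeff_mk _ _

variable (P) in
theorem pgf_zero [IsProbabilityMeasure P] : pgf P 0 = 1 := by
  ext n
  rcases eq_or_ne n 0 with rfl | hn
  · simp [Set.preimage]
  · simp [coeff_one, hn, Set.preimage, Ne.symm hn]

theorem ProbabilityTheory.IndepFun.pgf_add {Y Z : Ω → ℕ} (hY : Measurable Y) (hZ : Measurable Z)
    (h : IndepFun Y Z P) [IsFiniteMeasure P] : pgf P (Y + Z) = pgf P Y * pgf P Z := by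
  ext n
  have hfiber : (Y + Z) ⁻¹' {n} = ⋃ kl ∈ antidiagonal n, Y ⁻¹' {kl.1} ∩ Z ⁻¹' {kl.2} := by
    ext ω; simp
  rw [coeff_pgf, coeff_mul, hfiber, measureReal_biUnion_finset]
  · refine sum_congr rfl fun kl _ => ?_
    rw [coeff_pgf, coeff_pgf, measureReal_def, h.measure_inter_preimage_eq_mul _ _
      (measurableSet_singleton _) (measurableSet_singleton _), ENNReal.toReal_mul]
    rfl
  · intro kl _ kl' _ hne
    refine Set.disjoint_left.mpr fun ω h h' => hne ?_
    simp only [Set.mem_inter_iff, Set.mem_preimage, Set.mem_singleton_iff] at h h'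
    exact Prod.ext (h.1.symm.trans h'.1) (h.2.symm.trans h'.2)
  · exact fun kl _ => (hY (measurableSet_singleton _)).inter (hZ (measurableSet_singleton _))

theorem ProbabilityTheory.iIndepFun.pgf_sum {ι : Type*} {B : ι → Ω → ℕ}
    (hB : ∀ i, Measurable (B i)) (h : iIndepFun B P) [IsProbabilityMeasure P] (s : Finset ι) :
    pgf P (∑ i ∈ s, B i) = ∏ i ∈ s, pgf P (B i) := by
  classical
  induction s using Finset.induction_on with
  | empty => simp [pgf_zero]
  | insert a s ha ih =>
    rw [sum_insert ha, prod_insert ha, add_comm, IndepFun.pgf_add (by fun_prop)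
      (hB a) (h.indepFun_finsetSum_of_notMem hB ha), ih, mul_comm]

theorem hasSum_coeff_pgf [IsProbabilityMeasure P] {Y : Ω → ℕ} (hY : Measurable Y) :
    HasSum (fun n => coeff n (pgf P Y)) 1 := by
  have hsum : ∑' n, P (Y ⁻¹' {n}) = 1 := by
    rw [← measure_iUnion (fun m n hmn => (Set.disjoint_singleton.mpr hmn).preimage Y)
      (fun n => hY (measurableSet_singleton n)),
      ← Set.preimage_iUnion, Set.iUnion_of_singleton, Set.preimage_univ, measure_univ]
  have := ENNReal.hasSum_toReal (hsum ▸ ENNReal.one_ne_top)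
  rw [← ENNReal.tsum_toReal_eq (fun n => measure_ne_top P _), hsum, ENNReal.toReal_one] at this
  simpa [measureReal_def] using this

theorem l1Norm_pgf [IsProbabilityMeasure P] {Y : Ω → ℕ} (hY : Measurable Y) :
    l1Norm (pgf P Y) = 1 :=
  l1Norm_eq_one_of_hasSum (fun n => by simp [measureReal_nonneg]) (hasSum_coeff_pgf hY)

theorem pgf_eq_of_bernoulli [IsProbabilityMeasure P] {Y : Ω → ℕ} (hY : Measurable Y)
    (h01 : ∀ ω, Y ω = 0 ∨ Y ω = 1) {p : ℝ} (hp : P.real {ω | Y ω = 1} = p) :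
    pgf P Y = C (1 - p) + C p * X := by
  have hm : MeasurableSet {ω | Y ω = 1} := hY (measurableSet_singleton 1)
  have h0 : Y ⁻¹' {0} = {ω | Y ω = 1}ᶜ := by
    ext ω; rcases h01 ω with h | h <;> simp [h]
  ext n
  rcases n with _ | _ | n
  · simp [h0, probReal_compl_eq_one_sub hm, hp]
  · simp [Set.preimage, hp, coeff_one]
  · have : Y ⁻¹' {n + 2} = ∅ := by
      ext ω; rcases h01 ω with h | h <;> simp [h]
    simp [this, coeff_one]

theorem hasSum_integral_comp_pgf [IsFiniteMeasure P] {Y : Ω → ℕ} (hY : Measurable Y)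
    {f : ℕ → ℝ} {c : ℝ} (hf : ∀ n, |f n| ≤ c) :
    HasSum (fun n => f n * coeff n (pgf P Y)) (∫ ω, f (Y ω) ∂P) := by
  have hint : Integrable (fun ω => f (Y ω)) P :=
    .of_bound (measurable_from_nat.comp hY).aestronglyMeasurable c
      (.of_forall fun ω => (Real.norm_eq_abs _).le.trans (hf _))
  have hfiber (n : ℕ) : MeasurableSet (Y ⁻¹' {n}) := hY (measurableSet_singleton n)
  have := hasSum_integral_iUnion hfiber
    (fun m n hmn => (Set.disjoint_singleton.mpr hmn).preimage Y) hint.integrableOn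
  rw [← Set.preimage_iUnion, Set.iUnion_of_singleton, Set.preimage_univ,
    Measure.restrict_univ] at this
  have hterm (n : ℕ) : ∫ ω in Y ⁻¹' {n}, f (Y ω) ∂P = f n * coeff n (pgf P Y) := by
    rw [setIntegral_congr_fun (hfiber n) (g := fun _ => f n) fun ω hω => by rw [hω],
      setIntegral_const, smul_eq_mul, mul_comm, coeff_pgf]
  simpa only [hterm] using this

theorem l1Norm_pgf_sum_sub_poissonSeries_le [IsProbabilityMeasure P] {ι : Type*}
    {B : ι → Ω → ℕ} (hmeas : ∀ i, Measurable (B i)) (hindep : iIndepFun B P)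
    (h01 : ∀ i ω, B i ω = 0 ∨ B i ω = 1) {p : ι → ℝ} (hp : ∀ i, P.real {ω | B i ω = 1} = p i)
    (s : Finset ι) :
    l1Norm (pgf P (∑ i ∈ s, B i) - poissonSeries (∑ i ∈ s, p i))
      ≤ ENNReal.ofReal (2 * ∑ i ∈ s, p i ^ 2) := by
  have hp0 (i : ι) : 0 ≤ p i := hp i ▸ measureReal_nonneg
  rw [hindep.pgf_sum hmeas, poissonSeries_sum]
  calc _ ≤ ∑ i ∈ s, l1Norm (pgf P (B i) - poissonSeries (p i)) :=
        l1Norm_prod_sub_prod_le _ _ _ (fun i _ => (l1Norm_pgf (hmeas i)).le)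
          (fun i _ => (l1Norm_poissonSeries (hp0 i)).le)
    _ ≤ ∑ i ∈ s, ENNReal.ofReal (2 * p i ^ 2) := sum_le_sum fun i _ => by
        rw [pgf_eq_of_bernoulli (hmeas i) (h01 i) (hp i)]
        exact l1Norm_bernoulli_sub_poissonSeries_le (hp0 i)
    _ = ENNReal.ofReal (2 * ∑ i ∈ s, p i ^ 2) := by
        rw [mul_sum, ENNReal.ofReal_sum_of_nonneg fun i _ => by positivity]

end GeneratingFunction

theorem stmt13_general {Ω : Type*} [MeasurableSpace Ω] (P : Measure Ω) [IsProbabilityMeasure P]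
    (n : ℕ) (p : Fin n → ℝ)
    (B : Fin n → Ω → ℕ) (hmeas : ∀ k, Measurable (B k))
    (hB01 : ∀ k ω, B k ω = 0 ∨ B k ω = 1)
    (hBp : ∀ k, (P {ω | B k ω = 1}).toReal = p k)
    (hindep : ProbabilityTheory.iIndepFun B P)
    (μ : ℝ) (hμ : μ = ∑ k, p k) (hμpos : 0 < μ) :
    |(∫ ω, (1 : ℝ) / (1 + ((∑ k, B k ω : ℕ) : ℝ)) ∂P) - (1 - Real.exp (-μ)) / μ|
      ≤ 2 * ∑ k, (p k) ^ 2 := by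
  have hf (j : ℕ) : |(1 : ℝ) / (1 + j)| ≤ 1 := by
    rw [abs_of_nonneg (by positivity)]
    exact div_le_one_of_le₀ (by simp) (by positivity)
  have hE := hasSum_integral_comp_pgf (P := P) (Y := ∑ k, B k) (by fun_prop) hf
  simp only [Finset.sum_apply] at hE
  have hT := hasSum_one_div_succ_mul_coeff_poissonSeries hμpos.ne'
  rw [← (hE.sub hT).tsum_eq]
  simp_rw [← mul_sub, ← map_sub]
  refine abs_tsum_mul_coeff_le hf (by positivity) ?_
  rw [hμ]
  exact l1Norm_pgf_sum_sub_poissonSeries_le hmeas hindep hB01 hBp univ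

/-- For a Poisson binomial random variable `X = ∑ B_k` (independent Bernoullis with success
probabilities `p k`, mean `μ = ∑ p k > 0`), the harmonic moment `E[1/(1+X)]` is within
`2 ∑ p k ^ 2` of the Poisson value `(1 − e^{−μ})/μ`. -/
theorem stmt13 {Ω : Type*} [MeasurableSpace Ω] (P : Measure Ω) [IsProbabilityMeasure P]
    (n : ℕ) (p : Fin n → ℝ) (hp : ∀ k, p k ∈ Set.Icc (0 : ℝ) 1)
    (B : Fin n → Ω → ℕ) (hmeas : ∀ k, Measurable (B k))
    (hB01 : ∀ k ω, B k ω = 0 ∨ B k ω = 1)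
    (hBp : ∀ k, (P {ω | B k ω = 1}).toReal = p k)
    (hindep : ProbabilityTheory.iIndepFun B P)
    (μ : ℝ) (hμ : μ = ∑ k, p k) (hμpos : 0 < μ) :
    |(∫ ω, (1 : ℝ) / (1 + ((∑ k, B k ω : ℕ) : ℝ)) ∂P) - (1 - Real.exp (-μ)) / μ|
      ≤ 2 * ∑ k, (p k) ^ 2 :=
  stmt13_general P n p B hmeas hB01 hBp hindep μ hμ hμpos
end
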